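/- For every function f : ℕ^k → ℕ there exist m ∈ ℕ such that: if f is in the Bellantoni–Cook class B with all arguments normal (i.e., f(x⃗;) ∈ B), then there is a polynomial p with nonnegative coefficients such that the binary length satisfies |f(x⃗)| ≤ p(|x₁|,...,|x_k|) for all x⃗. -/
import Mathlib


/-- Binary length: |0| = 0, |x| = |x/2| + 1 for x > 0. -/
def blen : ℕ → ℕ
  | 0 => 0
  | n+1 => blen ((n+1)/2) + 1
  decreasing_by exact Nat.div_lt_self (Nat.succ_pos n) one_lt_two

/-- The Bellantoni–Cook class `B` of two-sorted functions `f(x⃗; y⃗)`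
(`m` normal arguments, `n` safe arguments). -/
inductive BC : ∀ {m n : ℕ}, ((Fin m → ℕ) → (Fin n → ℕ) → ℕ) → Prop
  | zero {m n} : BC (fun (_ : Fin m → ℕ) (_ : Fin n → ℕ) => 0)
  | projN {m n} (i : Fin m) : BC (fun (x : Fin m → ℕ) (_ : Fin n → ℕ) => x i)
  | projS {m n} (i : Fin n) : BC (fun (_ : Fin m → ℕ) (y : Fin n → ℕ) => y i)
  | succ (i : Fin 2) : BC (fun (_ : Fin 0 → ℕ) (y : Fin 1 → ℕ) => 2 * y 0 + i)
  | pred : BC (fun (_ : Fin 0 → ℕ) (y : Fin 1 → ℕ) => y 0 / 2)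
  | cond : BC (fun (_ : Fin 0 → ℕ) (y : Fin 4 → ℕ) =>
      if y 0 = 0 then y 1 else if y 0 % 2 = 0 then y 2 else y 3)
  | comp {m n m' n'} (h : (Fin m' → ℕ) → (Fin n' → ℕ) → ℕ)
      (g : Fin m' → ((Fin m → ℕ) → (Fin 0 → ℕ) → ℕ))
      (g' : Fin n' → ((Fin m → ℕ) → (Fin n → ℕ) → ℕ)) :
      BC h → (∀ i, BC (g i)) → (∀ j, BC (g' j)) →
      BC (fun x y => h (fun i => g i x Fin.elim0) (fun j => g' j x y))
  | srec {m n} (g : (Fin m → ℕ) → (Fin n → ℕ) → ℕ)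
      (h : Fin 2 → ((Fin (m+1) → ℕ) → (Fin (n+1) → ℕ) → ℕ))
      (f : (Fin (m+1) → ℕ) → (Fin n → ℕ) → ℕ) :
      BC g → (∀ i, BC (h i)) →
      (∀ x y, f (Fin.cons 0 x) y = g x y) →
      (∀ z x y, z ≠ 0 → f (Fin.cons z x) y =
        h ⟨z % 2, Nat.mod_lt z (by norm_num)⟩
          (Fin.cons (z / 2) x) (Fin.snoc y (f (Fin.cons (z / 2) x) y))) →
      BC f

open MvPolynomial Finset in
private lemma blen_pos_eq {z : ℕ} (hz : z ≠ 0) : blen z = blen (z/2) + 1 := by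
  cases z with
  | zero => exact absurd rfl hz
  | succ n => rw [blen]

private lemma blen_div2_le (z : ℕ) : blen (z/2) ≤ blen z := by
  rcases eq_or_ne z 0 with h | h
  · subst h; simp
  · rw [blen_pos_eq h]; omega

private lemma blen_double_le (y i : ℕ) (hi : i < 2) : blen (2*y+i) ≤ blen y + 1 := by
  rcases eq_or_ne (2*y+i) 0 with h | h
  · rw [h]; simp [blen]
  · rw [blen_pos_eq h]
    have hd : (2*y+i)/2 = y := by omega
    rw [hd]

open MvPolynomial Finset in
private lemma eval_mono {σ : Type*} {v w : σ → ℕ} (h : ∀ i, v i ≤ w i) (p : MvPolynomial σ ℕ) :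
    eval v p ≤ eval w p := by
  induction p using MvPolynomial.induction_on with
  | C a => simp
  | add p q hp hq => simp only [map_add]; exact add_le_add hp hq
  | mul_X p i hp => simp only [map_mul, eval_X]; exact Nat.mul_le_mul hp (h i)

open MvPolynomial Finset in
private lemma eval_bind₁' {σ τ : Type*} (v : τ → ℕ) (g : σ → MvPolynomial τ ℕ)
    (q : MvPolynomial σ ℕ) :
    eval v (bind₁ g q) = eval (fun i => eval v (g i)) q :=
  eval₂Hom_bind₁ _ _ _ _

open MvPolynomial Finset in
private lemma bc_bound {m n : ℕ} (f : (Fin m → ℕ) → (Fin n → ℕ) → ℕ) (hf : BC f) :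
    ∃ p : MvPolynomial (Fin m) ℕ, ∀ x y,
      blen (f x y) ≤ eval (fun i => blen (x i)) p + (univ.sup fun j => blen (y j)) := by
  induction hf with
  | zero => exact ⟨0, by simp [blen]⟩
  | projN i => exact ⟨X i, by intro x y; simp⟩
  | projS i =>
    refine ⟨0, fun x y => ?_⟩
    simpa using Finset.le_sup (f := fun j => blen (y j)) (mem_univ i)
  | succ i =>
    refine ⟨C 1, fun x y => ?_⟩
    have h1 : blen (2 * y 0 + (i : ℕ)) ≤ blen (y 0) + 1 := blen_double_le _ _ i.isLt
    have h2 : blen (y 0) ≤ univ.sup fun j => blen (y j) :=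
      Finset.le_sup (f := fun j => blen (y j)) (mem_univ 0)
    simp only [eval_C]
    omega
  | pred =>
    refine ⟨0, fun x y => ?_⟩
    have h2 : blen (y 0) ≤ univ.sup fun j => blen (y j) :=
      Finset.le_sup (f := fun j => blen (y j)) (mem_univ 0)
    have := blen_div2_le (y 0)
    simpa using le_trans this h2
  | cond =>
    refine ⟨0, fun x y => ?_⟩
    have h2 : ∀ j, blen (y j) ≤ univ.sup fun j => blen (y j) := fun j =>
      Finset.le_sup (f := fun j => blen (y j)) (mem_univ j)
    simp only [map_zero, zero_add]
    split_ifs <;> apply h2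
  | comp h g g' hh hg hg' ihh ihg ihg' =>
    obtain ⟨q, hq⟩ := ihh
    choose pg hpg using ihg
    choose pg' hpg' using ihg'
    refine ⟨bind₁ pg q + ∑ j, pg' j, fun x y => ?_⟩
    set v : _ → ℕ := fun i => blen (x i) with hv
    set Y : ℕ := univ.sup fun j => blen (y j) with hY
    have hgi : ∀ i, blen (g i x Fin.elim0) ≤ eval v (pg i) := by
      intro i
      simpa using hpg i x Fin.elim0
    have step1 : blen (h (fun i => g i x Fin.elim0) (fun j => g' j x y))
        ≤ eval (fun i => blen (g i x Fin.elim0)) q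
          + univ.sup (fun j => blen (g' j x y)) := hq _ _
    have step2 : eval (fun i => blen (g i x Fin.elim0)) q ≤ eval v (bind₁ pg q) := by
      rw [eval_bind₁']
      exact eval_mono hgi q
    have step3 : (univ.sup fun j => blen (g' j x y)) ≤ (∑ j, eval v (pg' j)) + Y := by
      refine Finset.sup_le fun j _ => ?_
      refine le_trans (hpg' j x y) (add_le_add ?_ le_rfl)
      exact Finset.single_le_sum (f := fun j => eval v (pg' j)) (fun i _ => Nat.zero_le _) (mem_univ j)
    calc blen (h (fun i => g i x Fin.elim0) (fun j => g' j x y))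
        ≤ eval (fun i => blen (g i x Fin.elim0)) q + univ.sup (fun j => blen (g' j x y)) := step1
      _ ≤ eval v (bind₁ pg q) + ((∑ j, eval v (pg' j)) + Y) := add_le_add step2 step3
      _ = eval v (bind₁ pg q + ∑ j, pg' j) + Y := by
          simp [map_sum, add_assoc]
  | srec g h f hg hh hbase hstep ihg ihh =>
    obtain ⟨pg, hpg⟩ := ihg
    choose ph hph using ihh
    set S : MvPolynomial (Fin (_+1)) ℕ := ∑ i, ph i with hS
    refine ⟨rename Fin.succ pg + X 0 * S, fun x' y => ?_⟩
    have key : ∀ z x y, blen (f (Fin.cons z x) y)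
        ≤ eval (fun i => blen (Fin.cons (α := fun _ => ℕ) z x i)) (rename Fin.succ pg + X 0 * S)
          + univ.sup (fun j => blen (y j)) := by
      intro z
      induction z using Nat.strong_induction_on with
      | _ z ih =>
        intro x y
        set Y : ℕ := univ.sup fun j => blen (y j) with hY
        rcases eq_or_ne z 0 with rfl | hz
        · rw [hbase x y]
          have := hpg x y
          have hrw : eval (fun i => blen (Fin.cons (α := fun _ => ℕ) 0 x i)) (rename Fin.succ pg)
              = eval (fun i => blen (x i)) pg := by
            rw [eval_rename]
            congr 1
          simp only [map_add]
          rw [hrw]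
          omega
        · rw [hstep z x y hz]
          set w : Fin _ → ℕ := fun i => blen (Fin.cons (α := fun _ => ℕ) (z/2) x i) with hw
          set v : Fin _ → ℕ := fun i => blen (Fin.cons (α := fun _ => ℕ) z x i) with hv
          have hwv : ∀ i, w i ≤ v i := by
            intro i
            refine Fin.cases ?_ (fun j => ?_) i <;> simp [hw, hv, blen_div2_le]
          set F : ℕ := f (Fin.cons (z/2) x) y with hF
          have hsup : (univ.sup fun j => blen (Fin.snoc (α := fun _ => ℕ) y F j)) ≤ max Y (blen F) := by
            refine Finset.sup_le fun j _ => ?_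
            refine Fin.lastCases ?_ (fun j => ?_) j
            · simp
            · simp only [Fin.snoc_castSucc]
              exact le_max_of_le_left (Finset.le_sup (f := fun j => blen (y j)) (mem_univ j))
          have hFle : blen F ≤ eval w (rename Fin.succ pg + X 0 * S) + Y :=
            ih (z/2) (Nat.div_lt_self (Nat.pos_of_ne_zero hz) one_lt_two) x y
          have hhb : blen (h ⟨z % 2, Nat.mod_lt z (by norm_num)⟩ (Fin.cons (z/2) x) (Fin.snoc y F))
              ≤ eval w (ph ⟨z % 2, Nat.mod_lt z (by norm_num)⟩)
                + univ.sup (fun j => blen (Fin.snoc (α := fun _ => ℕ) y F j)) := hph _ _ _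
          have hphS : eval w (ph ⟨z % 2, Nat.mod_lt z (by norm_num)⟩) ≤ eval v S := by
            refine le_trans ?_ (eval_mono hwv S)
            rw [hS, map_sum]
            exact Finset.single_le_sum (f := fun i => eval w (ph i)) (fun i _ => Nat.zero_le _)
              (mem_univ _)
          have hren : eval w (rename Fin.succ pg) = eval v (rename Fin.succ pg) := by
            rw [eval_rename, eval_rename]
            congr 1
          have hblenz : blen z = blen (z/2) + 1 := blen_pos_eq hz
          have hwS : eval w S ≤ eval v S := eval_mono hwv S
          have hw0 : w 0 = blen (z/2) := by simp [hw]
          have hv0 : v 0 = blen z := by simp [hv]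
          calc blen (h ⟨z % 2, Nat.mod_lt z (by norm_num)⟩ (Fin.cons (z/2) x) (Fin.snoc y F))
              ≤ eval w (ph ⟨z % 2, Nat.mod_lt z (by norm_num)⟩)
                + univ.sup (fun j => blen (Fin.snoc (α := fun _ => ℕ) y F j)) := hhb
            _ ≤ eval v S + max Y (blen F) := add_le_add hphS hsup
            _ ≤ eval v S + (eval w (rename Fin.succ pg + X 0 * S) + Y) := by
                refine add_le_add le_rfl (max_le (Nat.le_add_left _ _) hFle)
            _ ≤ eval v (rename Fin.succ pg + X 0 * S) + Y := by
                simp only [map_add, map_mul, eval_X, hren, hw0, hv0, hblenz]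
                have h1 : eval w S ≤ eval v S := hwS
                nlinarith [hwS]
        -- end
    have hx' : x' = Fin.cons (x' 0) (Fin.tail x') := (Fin.cons_self_tail x').symm
    rw [hx']
    exact key (x' 0) (Fin.tail x') y

open MvPolynomial Finset in
/-- Poly-max bounding for `B`-functions with all arguments normal. -/
theorem bc_polymax_bound {k : ℕ} (f : (Fin k → ℕ) → (Fin 0 → ℕ) → ℕ) (hf : BC f) :
    ∃ p : MvPolynomial (Fin k) ℕ, ∀ x : Fin k → ℕ,
      blen (f x Fin.elim0) ≤ MvPolynomial.eval (fun i => blen (x i)) p := by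
  obtain ⟨p, hp⟩ := bc_bound f hf
  exact ⟨p, fun x => by simpa using hp x Fin.elim0⟩
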